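/- Let Z = f(X, X̃) where X and X̃ are independent random elements and f is a measurable real-valued function, and let (Z^1, Z^2) = (f(X, X̃), f(X, X̃')) be a Pick-and-Freeze pair, where X̃' is an independent copy of X̃ independent of (X, X̃). Let (Z_1^1, Z_1^2) and (Z_2^1, Z_2^2) be two independent copies of the pair (Z^1, Z^2) and let W be an independent random variable with the law of Z. Then the Cramér–von Mises index D = ∫_ℝ E[(F(t) − F^v(t))²] dF(t) satisfies D = P(Z_1^1 ≤ W, Z_1^2 ≤ W) − P(Z_1^1 ≤ W, Z_2^2 ≤ W). -/

import Mathlib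

/-!
Conditionally on `X`, the events `{Z ≤ t}` and `{Z2 ≤ t}` are independent with the same
probability `Fᵛ(t)`, so `E[Fᵛ(t)²] = P(Z ≤ t, Z2 ≤ t)`, while `E[Fᵛ(t)] = F(t)`. Hence
`E[(F(t) - Fᵛ(t))²] = P(Z ≤ t, Z2 ≤ t) - F(t)²`. Integrating against the law of `Z`, realised
by the independent `W`, turns the first term into `P(Z₁¹ ≤ W, Z₁² ≤ W)` and, since `Z₁¹` and `Z₂²`
are independent, each with the law of `Z`, the term `F(W)²` into `P(Z₁¹ ≤ W, Z₂² ≤ W)`.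
-/

open MeasureTheory ProbabilityTheory

theorem AEMeasurable.of_map_eq_map {Ω γ : Type*} {_ : MeasurableSpace Ω} {_ : MeasurableSpace γ}
    {μ : Measure Ω} [NeZero μ] {f g : Ω → γ} (hfg : μ.map f = μ.map g) (hg : AEMeasurable g μ) :
    AEMeasurable f μ :=
  .of_map_ne_zero (hfg ▸ (Measure.map_ne_zero_iff hg).mpr (NeZero.ne μ))

theorem MeasureTheory.integrable_measureReal_prodMk_preimage {α β : Type*} {_ : MeasurableSpace α}
    {_ : MeasurableSpace β} {ν : Measure α} {κ : Measure β} [IsFiniteMeasure ν] [IsFiniteMeasure κ]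
    {s : Set (α × β)} (hs : MeasurableSet s) : Integrable (fun a => κ.real (Prod.mk a ⁻¹' s)) ν :=
  .of_bound (measurable_measure_prodMk_left hs).ennreal_toReal.aestronglyMeasurable (κ.real .univ)
    (ae_of_all _ fun _ => by
      rw [Real.norm_of_nonneg measureReal_nonneg]
      exact measureReal_mono (Set.subset_univ _))

namespace ProbabilityTheory

variable {Ω α β : Type*} {mΩ : MeasurableSpace Ω} {mα : MeasurableSpace α}
  {mβ : MeasurableSpace β} {μ : Measure Ω} {X : Ω → α} {Y : Ω → β}

theorem IndepFun.measureReal_preimage_prodMk [IsFiniteMeasure μ] (hXY : IndepFun X Y μ)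
    (hX : AEMeasurable X μ) (hY : AEMeasurable Y μ) {s : Set (α × β)} (hs : MeasurableSet s) :
    μ.real ((fun ω => (X ω, Y ω)) ⁻¹' s) = ∫ x, (μ.map Y).real (Prod.mk x ⁻¹' s) ∂μ.map X := by
  rw [← map_measureReal_apply_of_aemeasurable (hX.prodMk hY) hs,
    hXY.map_prod_eq_prod_map_map hX hY, measureReal_def, Measure.prod_apply hs,
    ← integral_toReal (measurable_measure_prodMk_left hs).aemeasurable
      (ae_of_all _ fun _ => measure_lt_top _ _)]
  rfl

theorem IndepFun.condExp_comp_prodMk_ae_eq_integral {E : Type*} [NormedAddCommGroup E]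
    [NormedSpace ℝ E] [CompleteSpace E] [IsFiniteMeasure μ] (hXY : IndepFun X Y μ)
    (hX : Measurable X) (hY : AEMeasurable Y μ) {g : α × β → E} (hg : StronglyMeasurable g)
    (hg_int : Integrable g ((μ.map X).prod (μ.map Y))) :
    μ[fun ω => g (X ω, Y ω) | mα.comap X] =ᵐ[μ] fun ω => ∫ y, g (X ω, y) ∂μ.map Y := by
  have hmap := hXY.map_prod_eq_prod_map_map hX.aemeasurable hY
  have hint : Integrable (fun ω => g (X ω, Y ω)) μ := by
    rw [← hmap] at hg_int
    exact hg_int.comp_aemeasurable (hX.aemeasurable.prodMk hY)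
  refine (ae_eq_condExp_of_forall_setIntegral_eq hX.comap_le hint
    (fun s _ _ => (hg_int.integral_prod_left.comp_measurable hX).integrableOn) ?_ ?_).symm
  · rintro s ⟨t, ht, rfl⟩ _
    calc ∫ ω in X ⁻¹' t, ∫ y, g (X ω, y) ∂μ.map Y ∂μ
        = ∫ x in t, ∫ y, g (x, y) ∂μ.map Y ∂μ.map X :=
          (setIntegral_map ht hg.integral_prod_right'.aestronglyMeasurable hX.aemeasurable).symm
      _ = ∫ z in t ×ˢ Set.univ, g z ∂(μ.map X).prod (μ.map Y) := by
          rw [setIntegral_prod _ hg_int.integrableOn, Measure.restrict_univ]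
      _ = ∫ ω in X ⁻¹' t, g (X ω, Y ω) ∂μ := by
          rw [← hmap, setIntegral_map (ht.prod .univ) hg.aestronglyMeasurable
            (hX.aemeasurable.prodMk hY), Set.mk_preimage_prod, Set.preimage_univ, Set.inter_univ]
  · exact (hg.integral_prod_right'.comp_measurable
      (Measurable.of_comap_le le_rfl)).aestronglyMeasurable

theorem IndepFun.identDistrib_prodMk {Y' : Ω → β} [IsFiniteMeasure μ] (hXY : IndepFun X Y μ)
    (hXY' : IndepFun X Y' μ) (hX : AEMeasurable X μ) (hYY' : IdentDistrib Y Y' μ μ) :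
    IdentDistrib (fun ω => (X ω, Y ω)) (fun ω => (X ω, Y' ω)) μ μ where
  aemeasurable_fst := hX.prodMk hYY'.aemeasurable_fst
  aemeasurable_snd := hX.prodMk hYY'.aemeasurable_snd
  map_eq := by
    rw [hXY.map_prod_eq_prod_map_map hX hYY'.aemeasurable_fst,
      hXY'.map_prod_eq_prod_map_map hX hYY'.aemeasurable_snd, hYY'.map_eq]

theorem integral_sq_measureReal_sub_condExp_indicator_eq [IsProbabilityMeasure μ] {Y' : Ω → β}
    (hX : Measurable X) (hY : Measurable Y) (hYY' : IdentDistrib Y Y' μ μ)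
    (hX_YY' : IndepFun X (fun ω => (Y ω, Y' ω)) μ) (hY_Y' : IndepFun Y Y' μ)
    {A : Set (α × β)} (hA : MeasurableSet A) :
    ∫ ω, (μ.real ((fun ω => (X ω, Y ω)) ⁻¹' A)
        - μ[((fun ω => (X ω, Y ω)) ⁻¹' A).indicator fun _ => (1 : ℝ) | mα.comap X] ω) ^ 2 ∂μ
      = μ.real ((fun ω => (X ω, Y ω)) ⁻¹' A ∩ (fun ω => (X ω, Y' ω)) ⁻¹' A)
        - μ.real ((fun ω => (X ω, Y ω)) ⁻¹' A) ^ 2 := by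
  set B := (fun ω => (X ω, Y ω)) ⁻¹' A
  set V := μ[B.indicator fun _ => (1 : ℝ) | mα.comap X]
  have hB : MeasurableSet B := (hX.prodMk hY) hA
  have hmean : μ[V] = μ.real B := integral_condExp_indicator hX hB
  have hV : MemLp V 2 μ :=
    (memLp_indicator_const 2 hB 1 (Or.inr (measure_ne_top μ B))).condExp one_le_two
  have hVX : V =ᵐ[μ] fun ω => (μ.map Y).real (Prod.mk (X ω) ⁻¹' A) := by
    refine ((hX_YY'.comp measurable_id measurable_fst).condExp_comp_prodMk_ae_eq_integral hX
      hY.aemeasurable (stronglyMeasurable_const.indicator hA)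
      ((integrable_const 1).indicator hA)).trans (ae_of_all _ fun ω => ?_)
    exact integral_indicator_one (measurable_prodMk_left hA)
  have hC : MeasurableSet {z : α × (β × β) | (z.1, z.2.1) ∈ A ∧ (z.1, z.2.2) ∈ A} :=
    (measurable_fst.prodMk (measurable_fst.comp measurable_snd) hA).inter
      (measurable_fst.prodMk (measurable_snd.comp measurable_snd) hA)
  have hG : Measurable fun x => (μ.map Y).real (Prod.mk x ⁻¹' A) :=
    (measurable_measure_prodMk_left hA).ennreal_toReal
  have hsq : μ[V ^ 2] = μ.real (B ∩ (fun ω => (X ω, Y' ω)) ⁻¹' A) := by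
    calc μ[V ^ 2] = ∫ ω, (μ.map Y).real (Prod.mk (X ω) ⁻¹' A) ^ 2 ∂μ := by
          refine integral_congr_ae ?_
          filter_upwards [hVX] with ω h
          rw [Pi.pow_apply, h]
      _ = ∫ x, (μ.map Y).real (Prod.mk x ⁻¹' A) ^ 2 ∂μ.map X :=
          (integral_map hX.aemeasurable (hG.pow_const 2).aestronglyMeasurable).symm
      _ = ∫ x, (μ.map fun ω => (Y ω, Y' ω)).real (Prod.mk x ⁻¹'
            {z : α × (β × β) | (z.1, z.2.1) ∈ A ∧ (z.1, z.2.2) ∈ A}) ∂μ.map X := by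
          rw [hY_Y'.map_prod_eq_prod_map_map hY.aemeasurable hYY'.aemeasurable_snd,
            ← hYY'.map_eq]
          congr 1 with x
          rw [sq, ← measureReal_prod_prod]
          rfl
      _ = μ.real (B ∩ (fun ω => (X ω, Y' ω)) ⁻¹' A) :=
          (hX_YY'.measureReal_preimage_prodMk hX.aemeasurable
            (hY.aemeasurable.prodMk hYY'.aemeasurable_snd) hC).symm
  calc ∫ ω, (μ.real B - V ω) ^ 2 ∂μ = Var[V; μ] := by
        rw [variance_eq_integral hV.aemeasurable, hmean]
        congr 1 with ω
        ring
    _ = μ.real (B ∩ (fun ω => (X ω, Y' ω)) ⁻¹' A) - μ.real B ^ 2 := by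
        rw [variance_eq_sub hV, hmean, hsq]

theorem integral_sq_measureReal_sub_condExp_le_eq_map [IsProbabilityMeasure μ] {Y' : Ω → β}
    (hX : Measurable X) (hY : Measurable Y) (hYY' : IdentDistrib Y Y' μ μ)
    (hX_YY' : IndepFun X (fun ω => (Y ω, Y' ω)) μ) (hY_Y' : IndepFun Y Y' μ)
    {f : α × β → ℝ} (hf : Measurable f) (t : ℝ) :
    ∫ ω, (μ.real {ω | f (X ω, Y ω) ≤ t}
        - μ[{ω | f (X ω, Y ω) ≤ t}.indicator fun _ => (1 : ℝ) | mα.comap X] ω) ^ 2 ∂μ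
      = (μ.map fun ω => (f (X ω, Y ω), f (X ω, Y' ω))).real {q | q.1 ≤ t ∧ q.2 ≤ t}
        - (μ.map fun ω => (f (X ω, Y ω), f (X ω, Y' ω))).real {q | q.1 ≤ t}
          * (μ.map fun ω => (f (X ω, Y ω), f (X ω, Y' ω))).real {q | q.2 ≤ t} := by
  have hZZ' : AEMeasurable (fun ω => (f (X ω, Y ω), f (X ω, Y' ω))) μ :=
    (hf.comp (hX.prodMk hY)).aemeasurable.prodMk
      (hf.comp_aemeasurable (hX.aemeasurable.prodMk hYY'.aemeasurable_snd))
  have hZ_Z' : IdentDistrib (fun ω => f (X ω, Y ω)) (fun ω => f (X ω, Y' ω)) μ μ :=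
    ((hX_YY'.comp measurable_id measurable_fst).identDistrib_prodMk
      (hX_YY'.comp measurable_id measurable_snd) hX.aemeasurable hYY').comp hf
  have hZ' : μ.real {ω | f (X ω, Y' ω) ≤ t} = μ.real {ω | f (X ω, Y ω) ≤ t} :=
    congrArg ENNReal.toReal (hZ_Z'.measure_mem_eq measurableSet_Iic).symm
  have hIic₁ : MeasurableSet {q : ℝ × ℝ | q.1 ≤ t} := measurable_fst measurableSet_Iic
  have hIic₂ : MeasurableSet {q : ℝ × ℝ | q.2 ≤ t} := measurable_snd measurableSet_Iic
  have hIic : MeasurableSet {q : ℝ × ℝ | q.1 ≤ t ∧ q.2 ≤ t} := hIic₁.inter hIic₂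
  rw [map_measureReal_apply_of_aemeasurable hZZ' hIic,
    map_measureReal_apply_of_aemeasurable hZZ' hIic₁,
    map_measureReal_apply_of_aemeasurable hZZ' hIic₂]
  refine (integral_sq_measureReal_sub_condExp_indicator_eq hX hY hYY' hX_YY' hY_Y'
    (hf measurableSet_Iic : MeasurableSet {p | f p ≤ t})).trans ?_
  change _ = _ - μ.real {ω | f (X ω, Y ω) ≤ t} * μ.real {ω | f (X ω, Y' ω) ≤ t}
  rw [hZ', sq]
  rfl

theorem measureReal_le_sub_measureReal_le_eq_integral [IsFiniteMeasure μ] {W : Ω → ℝ}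
    {p p' : Ω → ℝ × ℝ} (hW : AEMeasurable W μ) (hp : AEMeasurable p μ)
    (hp' : AEMeasurable p' μ) (hW_pp' : IndepFun W (fun ω => (p ω, p' ω)) μ)
    (hp_p' : IndepFun p p' μ) :
    μ.real {ω | (p ω).1 ≤ W ω ∧ (p ω).2 ≤ W ω} - μ.real {ω | (p ω).1 ≤ W ω ∧ (p' ω).2 ≤ W ω}
      = ∫ w, ((μ.map p).real {q | q.1 ≤ w ∧ q.2 ≤ w}
          - (μ.map p).real {q | q.1 ≤ w} * (μ.map p').real {q | q.2 ≤ w}) ∂μ.map W := by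
  have hs : MeasurableSet {z : ℝ × (ℝ × ℝ) | z.2.1 ≤ z.1 ∧ z.2.2 ≤ z.1} :=
    (measurableSet_le (measurable_fst.comp measurable_snd) measurable_fst).inter
      (measurableSet_le (measurable_snd.comp measurable_snd) measurable_fst)
  have hs' : MeasurableSet {z : ℝ × ((ℝ × ℝ) × (ℝ × ℝ)) | z.2.1.1 ≤ z.1 ∧ z.2.2.2 ≤ z.1} :=
    (measurableSet_le (measurable_fst.comp (measurable_fst.comp measurable_snd))
      measurable_fst).inter
      (measurableSet_le (measurable_snd.comp (measurable_snd.comp measurable_snd)) measurable_fst)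
  have hW_p : IndepFun W p μ := hW_pp'.comp measurable_id measurable_fst
  refine (congr_arg₂ (· - ·) (hW_p.measureReal_preimage_prodMk hW hp hs)
    (hW_pp'.measureReal_preimage_prodMk hW (hp.prodMk hp') hs')).trans ?_
  rw [← integral_sub (integrable_measureReal_prodMk_preimage hs)
      (integrable_measureReal_prodMk_preimage hs'), hp_p'.map_prod_eq_prod_map_map hp hp']
  congr 1 with w
  rw [← measureReal_prod_prod]
  rfl

end ProbabilityTheory

/-- **Pick-and-Freeze representation of the Cramér–von Mises index.** With
`(Z^1, Z^2) = (f(X, X̃), f(X, X̃'))` the Pick-and-Freeze pair, `(Z_1^1, Z_1^2)` and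
`(Z_2^1, Z_2^2)` two independent copies of it, and `W` an independent variable with
the law of `Z`, one has `D = P(Z_1^1 ≤ W, Z_1^2 ≤ W) − P(Z_1^1 ≤ W, Z_2^2 ≤ W)`. -/
theorem cramer_von_mises_pick_and_freeze_representation
    {Ω : Type*} {E E' : Type u} [m0 : MeasurableSpace Ω] [mE : MeasurableSpace E]
    [mE' : MeasurableSpace E'] (P : Measure Ω) [IsProbabilityMeasure P]
    (X : Ω → E) (Xt Xt' : Ω → E')
    (hX : Measurable X) (hXt : Measurable Xt) (hXt' : Measurable Xt')
    (hindep : iIndepFun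
      (β := fun i : Option (Fin 2) => Option.elim i E fun _ => E')
      (m := fun i => match i with | none => mE | some _ => mE')
      (fun i => match i with | none => X | some j => (if j = 0 then Xt else Xt')) P)
    (hid : Measure.map Xt' P = Measure.map Xt P)
    (f : E × E' → ℝ) (hf : Measurable f)
    (Z Z2 : Ω → ℝ) (hZdef : ∀ ω, Z ω = f (X ω, Xt ω))
    (hZ2def : ∀ ω, Z2 ω = f (X ω, Xt' ω))
    -- the distribution function of `Z`, the conditional one given `X`, and the index
    (F : ℝ → ℝ) (hF : ∀ t, F t = (P {ω | Z ω ≤ t}).toReal)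
    (Fv : ℝ → Ω → ℝ)
    (hFv : ∀ t, Fv t = MeasureTheory.condExp (MeasurableSpace.comap X mE) P
      (Set.indicator {ω | Z ω ≤ t} fun _ => (1 : ℝ)))
    (D : ℝ) (hD : D = ∫ t, (∫ ω, (F t - Fv t ω) ^ 2 ∂P) ∂(Measure.map Z P))
    -- two independent copies of the Pick-and-Freeze pair and an independent `W`
    (pair : Fin 2 → Ω → ℝ × ℝ) (W : Ω → ℝ)
    (hcopies : iIndepFun
      (β := fun i : Option (Fin 2) => Option.elim i ℝ fun _ => ℝ × ℝ)
      (m := fun i => match i with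
        | none => inferInstanceAs (MeasurableSpace ℝ)
        | some _ => inferInstanceAs (MeasurableSpace (ℝ × ℝ)))
      (fun i => match i with | none => W | some j => pair j) P)
    (hpairlaw : ∀ j, Measure.map (pair j) P = Measure.map (fun ω => (Z ω, Z2 ω)) P)
    (hWlaw : Measure.map W P = Measure.map Z P) :
    D = (P {ω | (pair 0 ω).1 ≤ W ω ∧ (pair 0 ω).2 ≤ W ω}).toReal
      - (P {ω | (pair 0 ω).1 ≤ W ω ∧ (pair 1 ω).2 ≤ W ω}).toReal := by
  obtain rfl : Z = fun ω => f (X ω, Xt ω) := funext hZdef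
  obtain rfl : Z2 = fun ω => f (X ω, Xt' ω) := funext hZ2def
  have hX_T : IndepFun X (fun ω => (Xt ω, Xt' ω)) P := by
    refine (hindep.indepFun_prodMk (fun i => ?_) (some 0) (some 1) none (by simp)
      (by simp)).symm
    rcases i with _ | j
    · exact hX
    · by_cases hj : j = 0 <;> simp [hj, hXt, hXt']
  have hT : IndepFun Xt Xt' P := hindep.indepFun (i := some 0) (j := some 1) (by simp)
  have hXt_Xt' : IdentDistrib Xt Xt' P P := ⟨hXt.aemeasurable, hXt'.aemeasurable, hid.symm⟩
  have hZ : Measurable fun ω => f (X ω, Xt ω) := hf.comp (hX.prodMk hXt)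
  have hZ2 : Measurable fun ω => f (X ω, Xt' ω) := hf.comp (hX.prodMk hXt')
  have hW : AEMeasurable W P := .of_map_eq_map hWlaw hZ.aemeasurable
  have hpair j : AEMeasurable (pair j) P :=
    .of_map_eq_map (hpairlaw j) (hZ.prodMk hZ2).aemeasurable
  have hW_pair : IndepFun W (fun ω => (pair 0 ω, pair 1 ω)) P :=
    (hcopies.indepFun_prodMk₀ (fun i => by rcases i with _ | j; exacts [hW, hpair j])
      (some 0) (some 1) none (by simp) (by simp)).symm
  have hpair01 : IndepFun (pair 0) (pair 1) P :=
    hcopies.indepFun (i := some 0) (j := some 1) (by simp)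
  change D = P.real _ - P.real _
  rw [measureReal_le_sub_measureReal_le_eq_integral hW (hpair 0) (hpair 1) hW_pair hpair01,
    hpairlaw, hpairlaw, hWlaw, hD]
  congr 1 with t
  rw [hF, hFv]
  exact integral_sq_measureReal_sub_condExp_le_eq_map hX hXt hXt_Xt' hX_T hT hf t
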